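/- arXiv:2106.06861 — 2 statements merged into one kernel-verified Lean document; each statement's English description precedes it below -/
import Mathlib

section
/- Let t ∈ ℚ with t > 0 and t ≠ 1, and let Γ_t be the Weierstrass curve y² = x³ + a₁·x² + b₁·x over ℚ with a₁ = 2·(3t⁸ + 24t⁶ + 6t⁴ − 1) and b₁ = (t² − 1)⁶·(1 + 3t²)². Then the point P = (−(t² − 1)·(t + 1)⁴·(1 + 3t²), 4t·(t² − 1)·(t + 1)⁴·(1 + t²)·(1 + 3t²)) lies on Γ_t and has order 12 in the group of ℚ-rational points of Γ_t. -/
/-- The Weierstrass curve `y² = x³ + a·x² + b·x` over a field `F`. -/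
def Gamma {F : Type} [Field F] (a b : F) : WeierstrassCurve.Affine F :=
  { a₁ := 0, a₂ := a, a₃ := 0, a₄ := b, a₆ := 0 }

/-!
Write `P = (x₁, y₁)`. The chord-and-tangent formulas, each application certified by an explicit
slope, give `2P = (x₂, y₂)`, `3P = 2P + P = (x₃, y₃)` and `6P = 2(3P) = (0, 0)`, the rational
2-torsion point of `Γ`. Hence `12P = 0` and `6P ≠ 0`, while `4P = 2(2P) ≠ 0` because `y₂ ≠ 0`.
-/

open WeierstrassCurve.Affine

namespace Gamma

variable {F : Type} [Field F] {a b : F}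

lemma equation_iff {x y : F} :
    (Gamma a b).Equation x y ↔ y ^ 2 = x ^ 3 + a * x ^ 2 + b * x := by
  simp [WeierstrassCurve.Affine.equation_iff, Gamma]

lemma negY_eq (x y : F) : (Gamma a b).negY x y = -y := by
  simp [negY, Gamma]

lemma ne_negY [NeZero (2 : F)] {x y : F} (hy : y ≠ 0) : y ≠ (Gamma a b).negY x y := by
  rw [negY_eq]
  intro h
  have h2y : (2 : F) * y = 0 := by linear_combination h
  exact hy ((mul_eq_zero.1 h2y).resolve_left two_ne_zero)

lemma nonsingular_of_equation [NeZero (2 : F)] {x y : F} (hy : y ≠ 0)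
    (h : y ^ 2 = x ^ 3 + a * x ^ 2 + b * x) : (Gamma a b).Nonsingular x y :=
  (nonsingular_iff _ _).2 ⟨equation_iff.2 h, Or.inr (ne_negY hy)⟩

lemma nonsingular_zero_zero (hb : b ≠ 0) : (Gamma a b).Nonsingular 0 0 :=
  nonsingular_zero.2 ⟨rfl, Or.inr hb⟩

variable [DecidableEq F]

lemma two_nsmul_some_zero_zero (h : (Gamma a b).Nonsingular 0 0) : 2 • Point.some _ _ h = 0 := by
  rw [two_nsmul]
  exact Point.add_self_of_Y_eq (by rw [negY_eq, neg_zero])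

lemma two_nsmul_some_ne_zero [NeZero (2 : F)] {x y : F} (h : (Gamma a b).Nonsingular x y)
    (hy : y ≠ 0) : 2 • Point.some _ _ h ≠ 0 := by
  rw [two_nsmul, Point.add_self_of_Y_ne (ne_negY hy)]
  exact Point.some_ne_zero _

lemma two_nsmul_some [NeZero (2 : F)] {x y ℓ x' y' : F} (h : (Gamma a b).Nonsingular x y)
    (h' : (Gamma a b).Nonsingular x' y') (hy : y ≠ 0)
    (hℓ : ℓ * (2 * y) = 3 * x ^ 2 + 2 * a * x + b)
    (hx' : x' = ℓ ^ 2 - a - 2 * x) (hy' : y' = ℓ * (x - x') - y) :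
    2 • Point.some _ _ h = Point.some _ _ h' := by
  subst hx' hy'
  have h2y : y - -y ≠ 0 := by
    rw [sub_neg_eq_add, ← two_mul]
    exact mul_ne_zero two_ne_zero hy
  have hslope : (Gamma a b).slope x x y y = ℓ := by
    rw [slope_of_Y_ne rfl (ne_negY hy), negY_eq, div_eq_iff h2y]
    simp only [Gamma]
    linear_combination -hℓ
  rw [two_nsmul, Point.add_self_of_Y_ne (ne_negY hy), Point.some.injEq, hslope]
  constructor
  · simp only [addX, Gamma]; ring
  · rw [addY, negY_eq]; simp only [negAddY, addX, Gamma]; ring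

lemma some_add_some {x₁ y₁ x₂ y₂ ℓ x₃ y₃ : F} (h₁ : (Gamma a b).Nonsingular x₁ y₁)
    (h₂ : (Gamma a b).Nonsingular x₂ y₂) (h₃ : (Gamma a b).Nonsingular x₃ y₃) (hx : x₁ ≠ x₂)
    (hℓ : ℓ * (x₁ - x₂) = y₁ - y₂)
    (hx₃ : x₃ = ℓ ^ 2 - a - x₁ - x₂) (hy₃ : y₃ = ℓ * (x₁ - x₃) - y₁) :
    Point.some _ _ h₁ + Point.some _ _ h₂ = Point.some _ _ h₃ := by
  subst hx₃ hy₃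
  have hslope : (Gamma a b).slope x₁ x₂ y₁ y₂ = ℓ := by
    rw [slope_of_X_ne hx, div_eq_iff (sub_ne_zero.2 hx), hℓ]
  rw [Point.add_of_X_ne hx, Point.some.injEq, hslope]
  constructor
  · simp only [addX, Gamma]; ring
  · rw [addY, negY_eq]; simp only [negAddY, addX, Gamma]; ring

end Gamma

lemma addOrderOf_eq_twelve {G : Type*} [AddMonoid G] {P : G} (h12 : 12 • P = 0) (h6 : 6 • P ≠ 0)
    (h4 : 4 • P ≠ 0) : addOrderOf P = 12 := by
  refine addOrderOf_eq_of_nsmul_and_div_prime_nsmul (by norm_num) h12 fun p hp hdvd => ?_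
  have : p ≤ 12 := Nat.le_of_dvd (by norm_num) hdvd
  have hp23 : p = 2 ∨ p = 3 := by interval_cases p <;> simp_all +decide
  rcases hp23 with rfl | rfl <;> assumption

namespace TorsionTwelve

def a (t : ℚ) : ℚ := 2 * (3 * t ^ 8 + 24 * t ^ 6 + 6 * t ^ 4 - 1)

def b (t : ℚ) : ℚ := (t ^ 2 - 1) ^ 6 * (1 + 3 * t ^ 2) ^ 2

abbrev curve (t : ℚ) : WeierstrassCurve.Affine ℚ := Gamma (a t) (b t)

-- `(xₙ t, yₙ t)` is `n • P` for `P = (x₁ t, y₁ t)`.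
def x₁ (t : ℚ) : ℚ := -((t ^ 2 - 1) * (t + 1) ^ 4 * (1 + 3 * t ^ 2))

def y₁ (t : ℚ) : ℚ := 4 * t * (t ^ 2 - 1) * (t + 1) ^ 4 * (1 + t ^ 2) * (1 + 3 * t ^ 2)

def x₂ (t : ℚ) : ℚ := (t ^ 2 - 1) ^ 2 * (1 + 3 * t ^ 2) ^ 2

def y₂ (t : ℚ) : ℚ := -(4 * t ^ 2 * (t ^ 2 - 1) ^ 2 * (1 + t ^ 2) * (1 + 3 * t ^ 2) ^ 2)

def x₃ (t : ℚ) : ℚ := -((t ^ 2 - 1) ^ 3 * (1 + 3 * t ^ 2))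

def y₃ (t : ℚ) : ℚ := 8 * t ^ 3 * (t ^ 2 - 1) ^ 3 * (1 + 3 * t ^ 2)

variable {t : ℚ} (ht : 0 < t) (ht1 : t ≠ 1)
include ht ht1

lemma sq_sub_one_ne_zero : t ^ 2 - 1 ≠ 0 := by
  have : t ^ 2 - 1 = (t - 1) * (t + 1) := by ring
  rw [this]
  exact mul_ne_zero (sub_ne_zero.2 ht1) (by positivity)

lemma b_ne_zero : b t ≠ 0 := by
  have := sq_sub_one_ne_zero ht ht1
  unfold b; positivity

lemma y₁_ne_zero : y₁ t ≠ 0 := by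
  have := sq_sub_one_ne_zero ht ht1
  unfold y₁; positivity

lemma y₂_ne_zero : y₂ t ≠ 0 := by
  have := sq_sub_one_ne_zero ht ht1
  exact neg_ne_zero.2 (by positivity)

lemma y₃_ne_zero : y₃ t ≠ 0 := by
  have := sq_sub_one_ne_zero ht ht1
  unfold y₃; positivity

lemma x₂_ne_x₁ : x₂ t ≠ x₁ t := by
  have := sq_sub_one_ne_zero ht ht1
  have hdiff : x₂ t - x₁ t = 4 * t * (t ^ 2 - 1) * (1 + t ^ 2) * (1 + t) * (1 + 3 * t ^ 2) := by
    unfold x₁ x₂; ring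
  exact sub_ne_zero.1 (by rw [hdiff]; positivity)

lemma nonsingular₁ : (curve t).Nonsingular (x₁ t) (y₁ t) :=
  Gamma.nonsingular_of_equation (y₁_ne_zero ht ht1) (by unfold x₁ y₁ a b; ring)

lemma nonsingular₂ : (curve t).Nonsingular (x₂ t) (y₂ t) :=
  Gamma.nonsingular_of_equation (y₂_ne_zero ht ht1) (by unfold x₂ y₂ a b; ring)

lemma nonsingular₃ : (curve t).Nonsingular (x₃ t) (y₃ t) :=
  Gamma.nonsingular_of_equation (y₃_ne_zero ht ht1) (by unfold x₃ y₃ a b; ring)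

lemma two_nsmul_P (h : (curve t).Nonsingular (x₁ t) (y₁ t)) :
    2 • Point.some _ _ h = Point.some _ _ (nonsingular₂ ht ht1) :=
  Gamma.two_nsmul_some _ _ (y₁_ne_zero ht ht1) (ℓ := 3 * t ^ 4 - 4 * t ^ 3 - 2 * t ^ 2 - 4 * t - 1)
    (by unfold x₁ y₁ a b; ring) (by unfold x₁ x₂ a; ring) (by unfold x₁ y₁ x₂ y₂; ring)

lemma three_nsmul_P (h : (curve t).Nonsingular (x₁ t) (y₁ t)) :
    3 • Point.some _ _ h = Point.some _ _ (nonsingular₃ ht ht1) := by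
  rw [succ_nsmul, two_nsmul_P ht ht1]
  exact Gamma.some_add_some _ _ _ (x₂_ne_x₁ ht ht1)
    (ℓ := -3 * t ^ 4 + 2 * t ^ 3 - 4 * t ^ 2 - 2 * t - 1)
    (by unfold x₁ y₁ x₂ y₂; ring) (by unfold x₁ x₂ x₃ a; ring) (by unfold x₂ y₂ x₃ y₃; ring)

lemma six_nsmul_P (h : (curve t).Nonsingular (x₁ t) (y₁ t)) :
    6 • Point.some _ _ h = Point.some _ _ (Gamma.nonsingular_zero_zero (b_ne_zero ht ht1)) := by
  rw [show 6 = 2 * 3 from rfl, mul_nsmul', three_nsmul_P ht ht1]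
  exact Gamma.two_nsmul_some _ _ (y₃_ne_zero ht ht1) (ℓ := -8 * t ^ 3)
    (by unfold x₃ y₃ a b; ring) (by unfold x₃ a; ring) (by unfold x₃ y₃; ring)

lemma addOrderOf_P (h : (curve t).Nonsingular (x₁ t) (y₁ t)) :
    addOrderOf (Point.some _ _ h) = 12 := by
  refine addOrderOf_eq_twelve ?_ ?_ ?_
  · rw [show 12 = 2 * 6 from rfl, mul_nsmul', six_nsmul_P ht ht1]
    exact Gamma.two_nsmul_some_zero_zero _
  · rw [six_nsmul_P ht ht1]
    exact Point.some_ne_zero _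
  · rw [show 4 = 2 * 2 from rfl, mul_nsmul', two_nsmul_P ht ht1]
    exact Gamma.two_nsmul_some_ne_zero _ (y₂_ne_zero ht ht1)

end TorsionTwelve

/-- on the curve `Γ_t : y² = x³ + a₁x² + b₁x` with
`a₁ = 2(3t⁸ + 24t⁶ + 6t⁴ − 1)` and `b₁ = (t² − 1)⁶(1 + 3t²)²`, `t ∈ ℚ`, `t > 0`, `t ≠ 1`,
the point `P = (−(t²−1)(t+1)⁴(1+3t²), 4t(t²−1)(t+1)⁴(1+t²)(1+3t²))` lies on the curve
and has order 12. -/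
theorem stmt10 (t : ℚ) (ht : 0 < t) (ht1 : t ≠ 1) :
    let a₁ : ℚ := 2 * (3 * t ^ 8 + 24 * t ^ 6 + 6 * t ^ 4 - 1)
    let b₁ : ℚ := (t ^ 2 - 1) ^ 6 * (1 + 3 * t ^ 2) ^ 2
    let W : WeierstrassCurve.Affine ℚ := Gamma a₁ b₁
    W.Nonsingular (-((t ^ 2 - 1) * (t + 1) ^ 4 * (1 + 3 * t ^ 2)))
        (4 * t * (t ^ 2 - 1) * (t + 1) ^ 4 * (1 + t ^ 2) * (1 + 3 * t ^ 2)) ∧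
      ∀ h : W.Nonsingular (-((t ^ 2 - 1) * (t + 1) ^ 4 * (1 + 3 * t ^ 2)))
          (4 * t * (t ^ 2 - 1) * (t + 1) ^ 4 * (1 + t ^ 2) * (1 + 3 * t ^ 2)),
        addOrderOf (WeierstrassCurve.Affine.Point.some _ _ h) = 12 :=
  ⟨TorsionTwelve.nonsingular₁ ht ht1, TorsionTwelve.addOrderOf_P ht ht1⟩
end

section
/- Let t ∈ ℚ with t ∉ {−1, 0, 1}, set a₁ := 2·(3t⁸ + 24t⁶ + 6t⁴ − 1), b₁ := (t² − 1)⁶·(1 + 3t²)², and x₃ := (3/4)·(t + 1)⁴·(t − 1)⁴. Then there exists y₃ ∈ ℚ with y₃² = x₃³ + a₁·x₃² + b₁·x₃ (i.e. x₃ is the x-coordinate of a rational point on Γ_t) if and only if there exists v ∈ ℚ with v² = 75t⁴ + 66t² + 3. -/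
/-! The right-hand side of the Weierstrass equation at `x₃` factors as
`((t² - 1)⁴ (3t² + 1) / 8)² · (75t⁴ + 66t² + 3)`, and the square factor is nonzero
exactly when `t ≠ ±1`. -/

theorem exists_sq_eq_sq_mul_iff {K : Type*} [Field K] {c w : K} (hc : c ≠ 0) :
    (∃ y : K, y ^ 2 = c ^ 2 * w) ↔ ∃ v : K, v ^ 2 = w := by
  constructor
  · rintro ⟨y, hy⟩
    exact ⟨y / c, by rw [div_pow, hy, mul_div_cancel_left₀ w (pow_ne_zero 2 hc)]⟩
  · rintro ⟨v, rfl⟩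
    exact ⟨c * v, mul_pow c v 2⟩

theorem weierstrass_rhs_at_x₃_eq {K : Type*} [Field K] [CharZero K] (t : K) :
    ((3 / 4) * (t + 1) ^ 4 * (t - 1) ^ 4) ^ 3
      + 2 * (3 * t ^ 8 + 24 * t ^ 6 + 6 * t ^ 4 - 1) * ((3 / 4) * (t + 1) ^ 4 * (t - 1) ^ 4) ^ 2
      + (t ^ 2 - 1) ^ 6 * (1 + 3 * t ^ 2) ^ 2 * ((3 / 4) * (t + 1) ^ 4 * (t - 1) ^ 4) =
      ((t ^ 2 - 1) ^ 4 * (3 * t ^ 2 + 1) / 8) ^ 2 * (75 * t ^ 4 + 66 * t ^ 2 + 3) := by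
  ring

theorem stmt13_general (t : ℚ) (ht1 : t ≠ 1) (ht1' : t ≠ -1) :
    let a₁ : ℚ := 2 * (3 * t ^ 8 + 24 * t ^ 6 + 6 * t ^ 4 - 1)
    let b₁ : ℚ := (t ^ 2 - 1) ^ 6 * (1 + 3 * t ^ 2) ^ 2
    let x₃ : ℚ := (3 / 4) * (t + 1) ^ 4 * (t - 1) ^ 4
    (∃ y₃ : ℚ, y₃ ^ 2 = x₃ ^ 3 + a₁ * x₃ ^ 2 + b₁ * x₃) ↔
      (∃ v : ℚ, v ^ 2 = 75 * t ^ 4 + 66 * t ^ 2 + 3) := by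
  intro a₁ b₁ x₃
  have hsq : t ^ 2 - 1 ≠ 0 := by
    rw [sub_ne_zero, Ne, sq_eq_one_iff]
    exact not_or.mpr ⟨ht1, ht1'⟩
  have hc : (t ^ 2 - 1) ^ 4 * (3 * t ^ 2 + 1) / 8 ≠ 0 := by
    have : (3 : ℚ) * t ^ 2 + 1 ≠ 0 := by positivity
    positivity
  rw [weierstrass_rhs_at_x₃_eq t]
  exact exists_sq_eq_sq_mul_iff hc

/-- for `t ∈ ℚ \ {−1, 0, 1}` and `x₃ = (3/4)(t+1)⁴(t−1)⁴`, the value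
`x₃³ + a₁x₃² + b₁x₃` (with `a₁ = 2(3t⁸ + 24t⁶ + 6t⁴ − 1)`, `b₁ = (t² − 1)⁶(1 + 3t²)²`)
is a rational square if and only if `75t⁴ + 66t² + 3` is a rational square. -/
theorem stmt13 (t : ℚ) (ht0 : t ≠ 0) (ht1 : t ≠ 1) (ht1' : t ≠ -1) :
    let a₁ : ℚ := 2 * (3 * t ^ 8 + 24 * t ^ 6 + 6 * t ^ 4 - 1)
    let b₁ : ℚ := (t ^ 2 - 1) ^ 6 * (1 + 3 * t ^ 2) ^ 2
    let x₃ : ℚ := (3 / 4) * (t + 1) ^ 4 * (t - 1) ^ 4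
    (∃ y₃ : ℚ, y₃ ^ 2 = x₃ ^ 3 + a₁ * x₃ ^ 2 + b₁ * x₃) ↔
      (∃ v : ℚ, v ^ 2 = 75 * t ^ 4 + 66 * t ^ 2 + 3) :=
  stmt13_general t ht1 ht1'
end
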